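/- As virtual G-modules (i.e., in the representation ring of G), V(ρ) ⊗ V(ρ) equals the alternating sum Σ_{i≥0} (−1)^i [H^i(G/B, ∧•𝒯_{G/B})]; equivalently, the equivariant Euler–Poincaré characteristic χ_T(∧•𝒯_{G/B}) = Σ_{i≥0} (−1)^i ch(H^i(G/B, ∧•𝒯_{G/B})) equals ch(V(ρ) ⊗ V(ρ)) in ℤ[P]. -/

import Mathlib

open scoped BigOperators

namespace KostantHH

/-- The integral weight lattice of a rank-`ℓ` simple, simply-connected group /
simple Lie algebra, written in fundamental-weight coordinates (so the
fundamental weights `ϖᵢ` are the standard basis vectors, and pairing a weight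
with the `i`-th simple coroot is taking its `i`-th coordinate). -/
abbrev P (ℓ : ℕ) := Fin ℓ → ℤ

/-- The group algebra `ℤ[P]` of the weight lattice. -/
abbrev R (ℓ : ℕ) := AddMonoidAlgebra ℤ (P ℓ)

/-- `e μ` is the basis element `e^μ` of `ℤ[P]`. -/
noncomputable def e {ℓ : ℕ} (μ : P ℓ) : R ℓ := AddMonoidAlgebra.single μ 1

/-- The Weyl vector `ρ = ϖ₁ + ⋯ + ϖ_ℓ`, i.e. `(1,…,1)` in fundamental-weight
coordinates. -/
def ρ {ℓ : ℕ} : P ℓ := fun _ => 1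

/-- A weight is dominant iff all its fundamental-weight coordinates (= pairings
with the simple coroots) are nonnegative. -/
def dominant {ℓ : ℕ} (lam : P ℓ) : Prop := ∀ i, 0 ≤ lam i

/-- The combinatorial root datum of a finite-dimensional simple complex Lie
algebra `𝔤` of rank `ℓ`: the simple roots `α i` (written in fundamental-weight
coordinates, so that `α i j = ⟨α i, αⱼ^∨⟩` is the Cartan matrix) and the set
`Φpos` of positive roots, whose sum is `2ρ`. -/
structure RootDatum (ℓ : ℕ) where
  α : Fin ℓ → P ℓ
  cartan_diag : ∀ i, α i i = 2
  cartan_offdiag : ∀ i j, i ≠ j → α i j ≤ 0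
  Φpos : Finset (P ℓ)
  simple_mem : ∀ i, α i ∈ Φpos
  pos_in_cone : ∀ β ∈ Φpos, ∃ c : Fin ℓ → ℕ, β = ∑ i, (c i : ℤ) • α i
  sum_pos_roots : ∑ β ∈ Φpos, β = (2 : ℤ) • ρ

/-- The dominance (Bruhat–Chevalley) order on weights: `λ ≤ μ` iff `μ - λ` is a
nonnegative integral combination of the simple roots (i.e. lies in `Q⁺`). -/
def domle {ℓ : ℕ} (S : RootDatum ℓ) (lam mu : P ℓ) : Prop :=
  ∃ c : Fin ℓ → ℕ, mu - lam = ∑ i, (c i : ℤ) • S.α i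

/-- The simple reflection `sᵢ(μ) = μ - ⟨μ, αᵢ^∨⟩ αᵢ`, as an automorphism of the
weight lattice. -/
def sRefl {ℓ : ℕ} (S : RootDatum ℓ) (i : Fin ℓ) : AddAut (P ℓ) where
  toFun μ := μ - μ i • S.α i
  invFun μ := μ - μ i • S.α i
  left_inv := by
    intro μ
    funext j
    simp only [Pi.sub_apply, Pi.smul_apply, smul_eq_mul]
    rw [S.cartan_diag i]
    ring
  right_inv := by
    intro μ
    funext j
    simp only [Pi.sub_apply, Pi.smul_apply, smul_eq_mul]
    rw [S.cartan_diag i]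
    ring
  map_add' := by
    intro μ ν
    funext j
    simp only [Pi.add_apply, Pi.sub_apply, Pi.smul_apply, smul_eq_mul]
    ring

/-- The Weyl group `W`, realized as the subgroup of automorphisms of the weight
lattice generated by the simple reflections. -/
def Wgrp {ℓ : ℕ} (S : RootDatum ℓ) : AddSubgroup (AddAut (P ℓ)) :=
  AddSubgroup.closure (Set.range (sRefl S))

/-- `w₀` is the longest element of the Weyl group: the (unique) element sending
all positive roots to negative roots. -/
def IsLongest {ℓ : ℕ} (S : RootDatum ℓ) (w₀ : AddAut (P ℓ)) : Prop :=
  w₀ ∈ Wgrp S ∧ ∀ β ∈ S.Φpos, -(w₀ β) ∈ S.Φpos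

/-- The action of a Weyl group element on the group algebra `ℤ[P]`,
`w(e^μ) := e^{w μ}`. -/
noncomputable def wact {ℓ : ℕ} (w : AddAut (P ℓ)) (f : R ℓ) : R ℓ :=
  AddMonoidAlgebra.ofCoeff (Finsupp.mapDomain (⇑w) f.coeff)

/-- The involution `◇` of `ℤ[P]`, determined by `◇(e^μ) = e^{-μ}`. -/
noncomputable def dia {ℓ : ℕ} (f : R ℓ) : R ℓ :=
  AddMonoidAlgebra.ofCoeff (Finsupp.mapDomain (fun μ : P ℓ => -μ) f.coeff)

/-- The shifted (dot) action of the Weyl group on weights: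
`w · λ = w(λ + ρ) - ρ`. -/
def dot {ℓ : ℕ} (w : AddAut (P ℓ)) (lam : P ℓ) : P ℓ := w (lam + ρ) - ρ

/-- `D` is the `i`-th Demazure operator `Dᵢ(f) = (f - e^{-αᵢ}·sᵢ(f))/(1 - e^{-αᵢ})`,
characterized by the equation `Dᵢ(f)·(1 - e^{-αᵢ}) = f - e^{-αᵢ}·sᵢ(f)`. -/
def IsDemazure {ℓ : ℕ} (S : RootDatum ℓ) (i : Fin ℓ) (D : Module.End ℤ (R ℓ)) : Prop :=
  ∀ f : R ℓ, D f * (1 - e (-(S.α i))) = f - e (-(S.α i)) * wact (sRefl S i) f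

/-- `Dw0` is the Demazure operator `D_{w₀} = D_{i₁} ∘ ⋯ ∘ D_{i_k}` attached to a
reduced word `w₀ = s_{i₁} ⋯ s_{i_k}` for the longest element `w₀` (a word for
`w₀` is reduced iff its length is `#Φ⁺ = ℓ(w₀)`). -/
def IsDw0 {ℓ : ℕ} (S : RootDatum ℓ) (w₀ : AddAut (P ℓ))
    (Dw0 : Module.End ℤ (R ℓ)) : Prop :=
  ∃ (word : List (Fin ℓ)) (D : Fin ℓ → Module.End ℤ (R ℓ)),
    (∀ i, IsDemazure S i (D i)) ∧
    (word.map (sRefl S)).sum = w₀ ∧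
    word.length = S.Φpos.card ∧
    Dw0 = (word.map D).prod

/-- The characters of the finite-dimensional irreducible highest weight
`𝔤`-modules `V(λ)`: `chV λ = ch V(λ) = ∑_μ (dim V(λ)_μ) e^μ ∈ ℤ[P]` for
dominant `λ`.  The recorded axioms express that `V(λ)` is a `𝔤`-module with
highest weight `λ` occurring with multiplicity one: weight multiplicities are
nonnegative, the coefficient of `e^λ` is `1`, all weights are `≤ λ` in
dominance order, and the character is Weyl-group invariant. -/
structure CharTheory {ℓ : ℕ} (S : RootDatum ℓ) where
  chV : P ℓ → R ℓ
  chV_coeff_nonneg : ∀ lam μ, 0 ≤ (chV lam).coeff μ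
  chV_self : ∀ lam, dominant lam → (chV lam).coeff lam = 1
  chV_support_le : ∀ lam, dominant lam → ∀ μ ∈ (chV lam).coeff.support, domle S μ lam
  chV_invariant : ∀ lam, dominant lam → ∀ i, wact (sRefl S i) (chV lam) = chV lam

/-- `g ∈ ℤ[P]` is the character of a finite-dimensional `𝔤`-module, i.e. a sum
of characters of irreducibles `V(μ)` with `μ` dominant. -/
def IsChar {ℓ : ℕ} {S : RootDatum ℓ} (T : CharTheory S) (g : R ℓ) : Prop :=
  ∃ l : List (P ℓ), (∀ μ ∈ l, dominant μ) ∧ g = (l.map T.chV).sum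

/-- The irreducible `V(λ)` occurs with multiplicity at least `m` in the
(semisimple, finite-dimensional) `𝔤`-module with character `g`. -/
def OccursWithMult {ℓ : ℕ} {S : RootDatum ℓ} (T : CharTheory S) (m : ℕ)
    (lam : P ℓ) (g : R ℓ) : Prop :=
  ∃ h : R ℓ, IsChar T h ∧ g = (m : ℤ) • T.chV lam + h

/-- The irreducible `V(λ)` occurs as a subrepresentation of the (semisimple,
finite-dimensional) `𝔤`-module with character `g`. -/
def Occurs {ℓ : ℕ} {S : RootDatum ℓ} (T : CharTheory S) (lam : P ℓ) (g : R ℓ) : Prop :=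
  OccursWithMult T 1 lam g

/-! Applying `◇` to `ch(∧•𝔲) = ∏_{β>0} (1 + e^{-β})` and factoring `e^β` out of each `1 + e^β`
gives `e^{2ρ} ∏_{β>0} (1 + e^{-β}) = e^ρ ch V(ρ)`, because the positive roots sum to `2ρ`.
Brauer's formula turns `D_{w₀}(e^ρ ch V(ρ))` into `ch V(ρ)²`, and the same computation shows
that `ch V(ρ) = e^ρ ∏_{β>0} (1 + e^{-β})` is `◇`-invariant. -/

section

variable {ℓ : ℕ}

theorem e_add (μ ν : P ℓ) : e (μ + ν) = e μ * e ν := by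
  simp [e, AddMonoidAlgebra.single_mul_single]

theorem e_zero : e (0 : P ℓ) = 1 := rfl

theorem e_sum {ι : Type*} (s : Finset ι) (μ : ι → P ℓ) :
    e (∑ i ∈ s, μ i) = ∏ i ∈ s, e (μ i) := by
  simp [e]

variable (ℓ) in
noncomputable def diaRingHom : R ℓ →+* R ℓ :=
  AddMonoidAlgebra.mapDomainRingHom ℤ (AddEquiv.neg (P ℓ)).toAddMonoidHom

theorem coe_diaRingHom : ⇑(diaRingHom ℓ) = dia := rfl

theorem dia_e (μ : P ℓ) : dia (e μ) = e (-μ) := by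
  simp [dia, e]

theorem dia_mul (f g : R ℓ) : dia (f * g) = dia f * dia g := by
  rw [← coe_diaRingHom, map_mul]

theorem dia_prod_one_add_e_neg (s : Finset (P ℓ)) :
    dia (∏ β ∈ s, (1 + e (-β))) = e (∑ β ∈ s, β) * ∏ β ∈ s, (1 + e (-β)) := by
  have one_add_e : ∀ β : P ℓ, 1 + e β = e β * (1 + e (-β)) := fun β => by
    rw [mul_add, mul_one, ← e_add, add_neg_cancel, e_zero, add_comm]
  rw [← coe_diaRingHom, map_prod, e_sum, ← Finset.prod_mul_distrib]
  refine Finset.prod_congr rfl fun β _ => ?_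
  rw [map_add, map_one, coe_diaRingHom, dia_e, neg_neg, one_add_e]

theorem dominant_ρ : dominant (ρ : P ℓ) := fun _ => zero_le_one

end

section

variable {ℓ : ℕ} (S : RootDatum ℓ) (T : CharTheory S)

theorem dia_prod_one_add_e_neg_posRoots (hchρ : T.chV ρ = e ρ * ∏ β ∈ S.Φpos, (1 + e (-β))) :
    dia (∏ β ∈ S.Φpos, (1 + e (-β))) = e ρ * T.chV ρ := by
  rw [dia_prod_one_add_e_neg, S.sum_pos_roots, two_smul, e_add, hchρ, mul_assoc]

theorem dia_chV_ρ (hchρ : T.chV ρ = e ρ * ∏ β ∈ S.Φpos, (1 + e (-β))) :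
    dia (T.chV ρ) = T.chV ρ := by
  conv_lhs => rw [hchρ]
  rw [dia_mul, dia_e, dia_prod_one_add_e_neg_posRoots S T hchρ, ← mul_assoc, ← e_add,
    neg_add_cancel, e_zero, one_mul]

end

theorem euler_characteristic_eq_char_Vrho_tensor_Vrho_general
    {ℓ : ℕ} (S : RootDatum ℓ) (T : CharTheory S)
    (Dw0 : Module.End ℤ (R ℓ))
    (hchρ : T.chV ρ = e ρ * ∏ β ∈ S.Φpos, (1 + e (-β)))
    (hBrauer : ∀ lam mu : P ℓ, dominant lam → dominant mu →
      T.chV lam * T.chV mu = Dw0 (e lam * T.chV mu))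
    (n : ℕ) (H : ℕ → R ℓ)
    (hEulerDem : ∑ i ∈ Finset.range (n + 1), ((-1) ^ i : ℤ) • H i
      = dia (Dw0 (dia (∏ β ∈ S.Φpos, (1 + e (-β)))))) :
    ∑ i ∈ Finset.range (n + 1), ((-1) ^ i : ℤ) • H i = T.chV ρ * T.chV ρ := by
  rw [hEulerDem, dia_prod_one_add_e_neg_posRoots S T hchρ, ← hBrauer ρ ρ dominant_ρ dominant_ρ,
    dia_mul, dia_chV_ρ S T hchρ]

/-- As virtual `G`-modules (i.e. in the representation ring
of `G`), `V(ρ) ⊗ V(ρ)` equals the alternating sum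
`∑_{i≥0} (-1)^i [H^i(G/B, ∧•𝒯_{G/B})]`; equivalently, the equivariant
Euler–Poincaré characteristic
`χ_T(∧•𝒯_{G/B}) = ∑_{i≥0} (-1)^i ch H^i(G/B, ∧•𝒯_{G/B})` equals
`ch(V(ρ) ⊗ V(ρ))` in `ℤ[P]`.

Here `H i` is the character of `H^i(G/B, ∧•𝒯_{G/B})` (vanishing for `i > n`);
`hEulerDem` is the Demazure Euler–Poincaré characteristic formula
`χ_T(𝓛(M)) = ◇(D_{w₀}(◇(ch M)))` applied to `∧•𝒯_{G/B} = 𝓛(∧•𝔲)` with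
`ch(∧•𝔲) = ∏_{β∈Φ⁺}(1+e^{-β})`; `hBrauer` is Brauer's tensor product character
formula; and `hchρ` is the character formula for `V(ρ)`. -/
theorem euler_characteristic_eq_char_Vrho_tensor_Vrho
    {ℓ : ℕ} (S : RootDatum ℓ) (T : CharTheory S)
    (w₀ : AddAut (P ℓ)) (hw₀ : IsLongest S w₀)
    (Dw0 : Module.End ℤ (R ℓ)) (hDw0 : IsDw0 S w₀ Dw0)
    (hchρ : T.chV ρ = e ρ * ∏ β ∈ S.Φpos, (1 + e (-β)))
    (hBrauer : ∀ lam mu : P ℓ, dominant lam → dominant mu →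
      T.chV lam * T.chV mu = Dw0 (e lam * T.chV mu))
    (n : ℕ) (H : ℕ → R ℓ)
    (hEulerDem : ∑ i ∈ Finset.range (n + 1), ((-1) ^ i : ℤ) • H i
      = dia (Dw0 (dia (∏ β ∈ S.Φpos, (1 + e (-β)))))) :
    ∑ i ∈ Finset.range (n + 1), ((-1) ^ i : ℤ) • H i = T.chV ρ * T.chV ρ :=
  euler_characteristic_eq_char_Vrho_tensor_Vrho_general S T Dw0 hchρ hBrauer n H hEulerDem

end KostantHH
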